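/- arXiv:math/0604567 — 2 statements merged into one kernel-verified Lean document; each statement's English description precedes it below -/
import Mathlib

section
/- Let T ∈ ℕ, ε ∈ (0,1), and let (a_i)_{i∈ℤ^N} be points with a_i ∈ εℤ^N ∩ (i(T+1)+[0,ε)^N), and let I := { i : (0,T/ε)^N ∩ (a_i + (0,T)^N) ≠ ∅ }. Then the Lebesgue measure satisfies ε^N · | (0, T/ε)^N \ ⋃_{i∈I} (a_i + (0,T)^N) | ≤ T^N ( 1 − ε^N ⌊ T / (ε(T+1)) ⌋^N ). -/
open MeasureTheory

/-- uncovered-volume estimate. With `a_i ∈ εℤ^N ∩ (i(T+1)+[0,ε)^N)` and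
`I = { i : (0,T/ε)^N ∩ (a_i+(0,T)^N) ≠ ∅ }`, one has
`ε^N ℒ^N((0,T/ε)^N \ ⋃_{i∈I}(a_i+(0,T)^N)) ≤ T^N (1 − ε^N ⌊T/(ε(T+1))⌋^N)`. -/
theorem stmt9 (N T : ℕ) (ε : ℝ) (hε : 0 < ε ∧ ε < 1)
    (a : (Fin N → ℤ) → (Fin N → ℝ))
    (ha : ∀ i, (∃ k : Fin N → ℤ, ∀ j, a i j = ε * (k j : ℝ)) ∧
      ∀ j, (i j : ℝ) * ((T : ℝ) + 1) ≤ a i j ∧ a i j < (i j : ℝ) * ((T : ℝ) + 1) + ε)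
    (I : Set (Fin N → ℤ))
    (hI : I = {i | ((Set.univ.pi fun _ : Fin N => Set.Ioo (0 : ℝ) ((T : ℝ) / ε)) ∩
          (Set.univ.pi fun j => Set.Ioo (a i j) (a i j + (T : ℝ)))).Nonempty}) :
    ε ^ N * (volume ((Set.univ.pi fun _ : Fin N => Set.Ioo (0 : ℝ) ((T : ℝ) / ε)) \
        ⋃ i ∈ I, Set.univ.pi fun j => Set.Ioo (a i j) (a i j + (T : ℝ)))).toReal
      ≤ (T : ℝ) ^ N * (1 - ε ^ N * (⌊(T : ℝ) / (ε * ((T : ℝ) + 1))⌋₊ : ℝ) ^ N) := by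
  obtain ⟨hε0, hε1⟩ := hε
  set M : ℕ := ⌊(T : ℝ) / (ε * ((T : ℝ) + 1))⌋₊ with hMdef
  set Q : Set (Fin N → ℝ) := Set.univ.pi fun _ : Fin N => Set.Ioo (0 : ℝ) ((T : ℝ) / ε)
    with hQdef
  set C : (Fin N → ℤ) → Set (Fin N → ℝ) :=
    fun i => Set.univ.pi fun j => Set.Ioo (a i j) (a i j + (T : ℝ)) with hCdef
  set U : Set (Fin N → ℝ) := ⋃ i ∈ I, C i with hUdef
  -- case N = 0
  rcases Nat.eq_zero_or_pos N with hN | hN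
  · subst hN
    have h0 : (fun _ : Fin 0 => (0 : ℤ)) ∈ I := by
      rw [hI]
      exact ⟨fun _ => 0, fun j _ => j.elim0, fun j _ => j.elim0⟩
    have hQU : Q \ U = ∅ := by
      ext x
      simp only [Set.mem_diff, Set.mem_empty_iff_false, iff_false, not_and, not_not]
      intro _
      exact Set.mem_biUnion h0 (fun j _ => j.elim0)
    rw [hQU]
    simp
  -- case T = 0
  rcases Nat.eq_zero_or_pos T with hT | hT
  · have hQ : Q = ∅ := by
      rw [hQdef]
      exact Set.univ_pi_eq_empty (i := ⟨0, hN⟩) (by simp [hT])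
    have h1 : Q \ U = ∅ := by rw [hQ]; simp
    rw [h1, hT]
    simp [zero_pow hN.ne']
  -- main case
  have hT0 : (0 : ℝ) < T := by exact_mod_cast hT
  have hTε0 : 0 < ε * ((T : ℝ) + 1) := by positivity
  have hMle : (M : ℝ) * (ε * ((T : ℝ) + 1)) ≤ T := by
    have := Nat.floor_le (a := (T : ℝ) / (ε * ((T : ℝ) + 1))) (by positivity)
    calc (M : ℝ) * (ε * ((T : ℝ) + 1)) ≤ ((T : ℝ) / (ε * ((T : ℝ) + 1))) * (ε * ((T : ℝ) + 1)) :=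
          by exact mul_le_mul_of_nonneg_right this hTε0.le
      _ = T := by field_simp
  have hMTε : (M : ℝ) * ((T : ℝ) + 1) ≤ (T : ℝ) / ε := by
    rw [le_div_iff₀ hε0]
    nlinarith
  -- measurability
  have hmeasC : ∀ i, MeasurableSet (C i) :=
    fun i => MeasurableSet.univ_pi fun j => measurableSet_Ioo
  have hmeasQ : MeasurableSet Q := MeasurableSet.univ_pi fun j => measurableSet_Ioo
  have hmeasU : MeasurableSet U := MeasurableSet.biUnion I.to_countable fun i _ => hmeasC i
  -- volumes
  have hvolC : ∀ i, volume (C i) = ENNReal.ofReal (T : ℝ) ^ N := by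
    intro i
    rw [hCdef]
    rw [volume_pi_pi]
    simp [Real.volume_Ioo]
  have hvolQ : volume Q = ENNReal.ofReal ((T : ℝ) / ε) ^ N := by
    rw [hQdef, volume_pi_pi]
    simp [Real.volume_Ioo]
  -- pairwise disjointness of the cubes
  have hdisj : ∀ i i' : Fin N → ℤ, i ≠ i' → Disjoint (C i) (C i') := by
    have key : ∀ p q : Fin N → ℤ, ∀ j, p j < q j → Disjoint (C p) (C q) := by
      intro p q j hj
      rw [Set.disjoint_left]
      intro x hx hx'
      have h1 : x j < a p j + T := (hx j trivial).2
      have h2 : a q j < x j := (hx' j trivial).1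
      have hp := (ha p).2 j
      have hq := (ha q).2 j
      have hc : (p j : ℝ) + 1 ≤ (q j : ℝ) := by exact_mod_cast hj
      nlinarith [mul_le_mul_of_nonneg_right hc (by positivity : (0:ℝ) ≤ (T : ℝ) + 1),
        hp.1, hp.2, hq.1, hq.2]
    intro i i' hne
    obtain ⟨j, hj⟩ := Function.ne_iff.mp hne
    rcases lt_or_gt_of_ne hj with h | h
    · exact key i i' j h
    · exact (key i' i j h).symm
  -- the good finite set
  set S : Finset (Fin N → ℤ) := Fintype.piFinset (fun _ : Fin N => Finset.Ico (0 : ℤ) (M : ℤ))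
    with hSdef
  have hScard : S.card = M ^ N := by
    rw [hSdef, Fintype.card_piFinset]
    simp [Int.card_Ico]
  have hmemS : ∀ i ∈ S, ∀ j, (0 : ℤ) ≤ i j ∧ i j < (M : ℤ) := by
    intro i hi j
    have := Fintype.mem_piFinset.mp hi j
    simpa [Finset.mem_Ico] using this
  have hCQ : ∀ i ∈ S, C i ⊆ Q := by
    intro i hi
    rw [hCdef, hQdef]
    apply Set.pi_mono
    intro j _
    have hij := hmemS i hi j
    have hij0 : (0 : ℝ) ≤ (i j : ℝ) := by exact_mod_cast hij.1
    have hijM : (i j : ℝ) ≤ (M : ℝ) - 1 := by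
      have : i j ≤ (M : ℤ) - 1 := by omega
      have h2 : (i j : ℝ) ≤ ((M : ℤ) - 1 : ℤ) := by exact_mod_cast this
      push_cast at h2
      linarith
    have hp := (ha i).2 j
    apply Set.Ioo_subset_Ioo
    · nlinarith [hp.1]
    · nlinarith [hp.2, mul_le_mul_of_nonneg_right hijM (by positivity : (0:ℝ) ≤ (T : ℝ) + 1)]
  have hSI : ∀ i ∈ S, i ∈ I := by
    intro i hi
    rw [hI]
    refine ⟨fun j => a i j + (T : ℝ) / 2, ?_, ?_⟩
    · apply hCQ i hi
      intro j _
      constructor <;> simp <;> linarith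
    · intro j _
      constructor <;> simp <;> linarith
  -- the measure of the good union
  have hBvol : volume (⋃ i ∈ S, C i) = (M : ENNReal) ^ N * ENNReal.ofReal (T : ℝ) ^ N := by
    rw [measure_biUnion_finset ?_ (fun i _ => hmeasC i)]
    · simp only [hvolC, Finset.sum_const, hScard, nsmul_eq_mul]
      push_cast
      ring
    · intro i hi i' hi' hne
      exact hdisj i i' hne
  -- main ENNReal inequality
  have hsub : (⋃ i ∈ S, C i) ⊆ U := Set.iUnion₂_subset fun i hi => Set.subset_biUnion_of_mem (hSI i hi)
  have hdisj2 : Disjoint (Q \ U) (⋃ i ∈ S, C i) :=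
    (Set.disjoint_sdiff_left).mono_right hsub
  have hun : (Q \ U) ∪ (⋃ i ∈ S, C i) ⊆ Q :=
    Set.union_subset Set.diff_subset (Set.iUnion₂_subset hCQ)
  have hmeasB : MeasurableSet (⋃ i ∈ S, C i) :=
    S.measurableSet_biUnion fun i _ => hmeasC i
  have hkey : volume (Q \ U) + volume (⋃ i ∈ S, C i) ≤ volume Q := by
    rw [← measure_union hdisj2 hmeasB]
    exact measure_mono hun
  -- pass to real numbers
  have hQfin : volume Q ≠ ⊤ := by rw [hvolQ]; exact ENNReal.pow_ne_top ENNReal.ofReal_ne_top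
  have hfin1 : volume (Q \ U) ≠ ⊤ :=
    fun h => hQfin (top_le_iff.mp (le_trans (by rw [h]; simp) hkey))
  have hreal : (volume (Q \ U)).toReal + (M : ℝ) ^ N * (T : ℝ) ^ N ≤ ((T : ℝ) / ε) ^ N := by
    have h1 := ENNReal.toReal_mono hQfin hkey
    rw [ENNReal.toReal_add hfin1 (by rw [hBvol]; exact ENNReal.mul_ne_top (ENNReal.pow_ne_top (ENNReal.natCast_ne_top M)) (ENNReal.pow_ne_top ENNReal.ofReal_ne_top))] at h1
    rw [hBvol, hvolQ] at h1
    simpa [ENNReal.toReal_pow, ENNReal.toReal_ofReal hT0.le,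
      ENNReal.toReal_ofReal (by positivity : (0:ℝ) ≤ (T : ℝ) / ε),
      ENNReal.toReal_mul] using h1
  -- final arithmetic
  have hεT : ε * ((T : ℝ) / ε) = T := by field_simp
  have hεN : ε ^ N * ((T : ℝ) / ε) ^ N = (T : ℝ) ^ N := by
    rw [← mul_pow, hεT]
  nlinarith [mul_le_mul_of_nonneg_left hreal (by positivity : (0:ℝ) ≤ ε ^ N)]
end

section
/- Let f : ℝ^N × ℝ^{d×N} → [0,∞) be continuous with f(y+k,ξ)=f(y,ξ) for all k ∈ ℤ^N, and satisfy (1/β)|ξ|^p − β ≤ f(y;ξ) ≤ β(1+|ξ|^p). Assume also the p-Lipschitz property |f(y;ξ) − f(y;η)| ≤ C(1+|ξ|^{p−1}+|η|^{p−1})|ξ−η| for all y, ξ, η. Let Ω be bounded open, u_n ⇀ u in W^{1,p}(Ω;ℝ^d), r_n → 0 in ℝ^N, and suppose {|∇u_n|^p} is equi-integrable. Then liminf_n ∫_Ω f(x/ε_n − r_n; ∇u_n) dx = liminf_n ∫_Ω f(x/ε_n; ∇u_n) dx for any sequence ε_n → 0⁺. -/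
/-!
Periodicity reduces `y` to a compact cube, so `f` is uniformly continuous in `y`, uniformly for
`ξ` in a ball: where `‖∇uₙ‖ ^ p` stays below a threshold `t`, the shift `rₙ` moves the integrand
by at most `ω(‖rₙ‖) → 0`. By Chebyshev the set where `‖∇uₙ‖ ^ p ≥ t` has measure at most `K / t`
uniformly in `n`, so by equi-integrability and the growth bound its contribution to both energies
is small. Hence the difference of the energies tends to `0`, and so their liminfs agree.
-/

open MeasureTheory Filter Set Topology

namespace Real

theorem sSup_le_sSup_of_forall_sub_mem {A B : Set ℝ} (hAB : ∀ δ > 0, ∀ x ∈ A, x - δ ∈ B)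
    (hA : A.Nonempty) (hB : BddAbove B) : sSup A ≤ sSup B :=
  csSup_le hA fun x hx => le_of_forall_pos_le_add fun δ hδ => by
    linarith [le_csSup hB (hAB δ hδ x hx)]

/-- No boundedness is needed: if `A` is empty or unbounded then so is `B`, and both take the junk
value `sSup = 0`. -/
theorem sSup_eq_of_forall_sub_mem {A B : Set ℝ} (hAB : ∀ δ > 0, ∀ x ∈ A, x - δ ∈ B)
    (hBA : ∀ δ > 0, ∀ x ∈ B, x - δ ∈ A) : sSup A = sSup B := by
  have bdd_iff : BddAbove A ↔ BddAbove B := by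
    refine ⟨fun ⟨M, hM⟩ => ⟨M + 1, fun x hx => ?_⟩, fun ⟨M, hM⟩ => ⟨M + 1, fun x hx => ?_⟩⟩
    · linarith [hM (hBA 1 one_pos x hx)]
    · linarith [hM (hAB 1 one_pos x hx)]
  have nonempty_iff : A.Nonempty ↔ B.Nonempty :=
    ⟨fun ⟨x, hx⟩ => ⟨_, hAB 1 one_pos x hx⟩, fun ⟨x, hx⟩ => ⟨_, hBA 1 one_pos x hx⟩⟩
  by_cases hA : A.Nonempty
  · by_cases hbdd : BddAbove A
    · exact le_antisymm (sSup_le_sSup_of_forall_sub_mem hAB hA (bdd_iff.1 hbdd))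
        (sSup_le_sSup_of_forall_sub_mem hBA (nonempty_iff.1 hA) hbdd)
    · rw [sSup_of_not_bddAbove hbdd, sSup_of_not_bddAbove (bdd_iff.not.1 hbdd)]
  · rw [not_nonempty_iff_eq_empty.1 hA, not_nonempty_iff_eq_empty.1 (nonempty_iff.not.1 hA)]

theorem liminf_eq_of_tendsto_sub {ι : Type*} {l : Filter ι} {a b : ι → ℝ}
    (h : Tendsto (a - b) l (𝓝 0)) : liminf a l = liminf b l := by
  have shift {a b : ι → ℝ} (h : Tendsto (a - b) l (𝓝 0)) (δ : ℝ) (hδ : 0 < δ) (x : ℝ)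
      (hx : ∀ᶠ n in l, x ≤ a n) : ∀ᶠ n in l, x - δ ≤ b n := by
    filter_upwards [hx, h (Iio_mem_nhds hδ)] with n hxn hn
    simp only [mem_preimage, mem_Iio, Pi.sub_apply] at hn
    linarith
  rw [liminf_eq, liminf_eq]
  refine sSup_eq_of_forall_sub_mem (shift h) (shift ?_)
  rw [← neg_sub, ← neg_zero]
  exact h.neg

end Real

theorem exists_forall_dist_lt_of_periodic {N : ℕ} {E F : Type*} [PseudoMetricSpace E]
    [PseudoMetricSpace F] {f : (Fin N → ℝ) → E → F}
    (hcont : Continuous fun q : (Fin N → ℝ) × E => f q.1 q.2)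
    (hper : ∀ (k : Fin N → ℤ) (y : Fin N → ℝ) ξ, f (y + fun j => (k j : ℝ)) ξ = f y ξ)
    {K : Set E} (hK : IsCompact K) {η : ℝ} (hη : 0 < η) :
    ∃ δ > 0, ∀ y y', dist y y' < δ → ∀ ξ ∈ K, dist (f y ξ) (f y' ξ) < η := by
  have hS : IsCompact ((univ.pi fun _ : Fin N => Icc (-1 : ℝ) 2) ×ˢ K) :=
    (isCompact_univ_pi fun _ => isCompact_Icc).prod hK
  obtain ⟨δ, hδ, hunif⟩ :=
    Metric.uniformContinuousOn_iff.1 (hS.uniformContinuousOn_of_continuous hcont.continuousOn) η hη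
  refine ⟨min δ 1, lt_min hδ one_pos, fun y y' hyy' ξ hξ => ?_⟩
  -- translate both points by the integer part of `y`, landing in the compact cube `[-1, 2]^N`
  set k : Fin N → ℝ := fun j => (⌊y j⌋ : ℝ)
  have hshift (z : Fin N → ℝ) : f z ξ = f (z - k) ξ := by
    rw [← hper (fun j => ⌊y j⌋) (z - k), sub_add_cancel]
  have hcoord (j : Fin N) : |y' j - y j| < 1 :=
    (dist_le_pi_dist y' y j).trans_lt (dist_comm y y' ▸ hyy'.trans_le (min_le_right _ _))
  have hmem (z : Fin N → ℝ) (hz : ∀ j, |z j - y j| < 1) :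
      (z - k, ξ) ∈ (univ.pi fun _ : Fin N => Icc (-1 : ℝ) 2) ×ˢ K := by
    refine ⟨mem_univ_pi.2 fun j => ?_, hξ⟩
    have := abs_lt.1 (hz j)
    have := Int.floor_le (y j)
    have := Int.lt_floor_add_one (y j)
    simp only [Pi.sub_apply, mem_Icc, k]
    constructor <;> linarith
  rw [hshift y, hshift y']
  refine hunif _ (hmem y fun j => by simp) _ (hmem y' hcoord) ?_
  rw [Prod.dist_eq, dist_self, max_eq_left dist_nonneg, dist_sub_right]
  exact hyy'.trans_le (min_le_left _ _)

theorem abs_sub_le_of_growth {Y E : Type*} [Norm E] {f : Y → E → ℝ} {p β : ℝ}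
    (hf0 : ∀ y ξ, 0 ≤ f y ξ) (hgrowth : ∀ y ξ, f y ξ ≤ β * (1 + ‖ξ‖ ^ p)) (hβ : 0 ≤ β) {ξ : E}
    (hξ : 1 ≤ ‖ξ‖ ^ p) (y y' : Y) : |f y ξ - f y' ξ| ≤ 2 * β * ‖ξ‖ ^ p := by
  refine abs_sub_le_of_nonneg_of_le (hf0 _ _) ?_ (hf0 _ _) ?_ <;>
    nlinarith [hgrowth y ξ, hgrowth y' ξ]

section
variable {α : Type*} [MeasurableSpace α] {μ : Measure α} {Ω : Set α}

theorem integrableOn_iff_of_growth {F W : α → ℝ} {β : ℝ} (hβ : 0 < β) (hμΩ : μ Ω ≠ ⊤)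
    (hF : AEStronglyMeasurable F (μ.restrict Ω)) (hW : AEStronglyMeasurable W (μ.restrict Ω))
    (hF0 : ∀ x, 0 ≤ F x) (hW0 : ∀ x, 0 ≤ W x)
    (hgrowth : ∀ x, (1 / β) * W x - β ≤ F x ∧ F x ≤ β * (1 + W x)) :
    IntegrableOn F Ω μ ↔ IntegrableOn W Ω μ := by
  have hconst (c : ℝ) : IntegrableOn (fun _ => c) Ω μ := integrableOn_const hμΩ
  constructor
  · refine fun hFi => ((hFi.const_mul β).add (hconst (β ^ 2))).mono' hW
      (Eventually.of_forall fun x => ?_)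
    have := (hgrowth x).1
    rw [Real.norm_of_nonneg (hW0 x), Pi.add_apply]
    field_simp at this
    nlinarith
  · refine fun hWi => ((hconst β).add (hWi.const_mul β)).mono' hF
      (Eventually.of_forall fun x => ?_)
    rw [Real.norm_of_nonneg (hF0 x), Pi.add_apply]
    linarith [(hgrowth x).2]

/-- `K < t * δ` is the Chebyshev condition making the superlevel set `{t ≤ W}` smaller than `δ`. -/
theorem setIntegral_le_of_sublevel_superlevel_bounds (hΩ : MeasurableSet Ω) (hμΩ : μ Ω ≠ ⊤)
    {D W : α → ℝ} (hD : IntegrableOn D Ω μ) (hW : IntegrableOn W Ω μ) (hWm : Measurable W)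
    (hW0 : ∀ x ∈ Ω, 0 ≤ W x) {K t δ η a c : ℝ} (hWK : ∫ x in Ω, W x ∂μ ≤ K) (ht : 0 < t)
    (hKt : K < t * δ)
    (hequi : ∀ E ⊆ Ω, MeasurableSet E → μ E < ENNReal.ofReal δ → ∫ x in E, W x ∂μ ≤ η)
    (ha : 0 ≤ a) (hc : 0 ≤ c) (hsmall : ∀ x ∈ Ω, W x < t → D x ≤ a)
    (hlarge : ∀ x ∈ Ω, t ≤ W x → D x ≤ c * W x) :
    ∫ x in Ω, D x ∂μ ≤ a * μ.real Ω + c * η := by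
  set B := {x | t ≤ W x}
  have hB : MeasurableSet B := measurableSet_le measurable_const hWm
  have hΩB : μ (Ω ∩ B) < ENNReal.ofReal δ := by
    have hcheb : t * μ.real (Ω ∩ B) ≤ K := by
      have := mul_meas_ge_le_integral_of_nonneg (ae_restrict_of_forall_mem hΩ hW0) hW t
      rw [measureReal_restrict_apply hB, inter_comm] at this
      linarith
    rw [ENNReal.lt_ofReal_iff_toReal_lt (measure_ne_top_of_subset inter_subset_left hμΩ)]
    exact lt_of_mul_lt_mul_left (hcheb.trans_lt hKt) ht.le
  have hsub : ∫ x in Ω \ B, D x ∂μ ≤ a * μ.real Ω := by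
    calc ∫ x in Ω \ B, D x ∂μ ≤ ∫ _ in Ω \ B, a ∂μ :=
          setIntegral_mono_on (hD.mono_set sdiff_subset)
            (integrableOn_const (measure_ne_top_of_subset sdiff_subset hμΩ)) (hΩ.diff hB)
            fun x hx => hsmall x hx.1 (not_le.1 hx.2)
      _ = a * μ.real (Ω \ B) := by rw [setIntegral_const, smul_eq_mul, mul_comm]
      _ ≤ a * μ.real Ω := by gcongr; exact sdiff_subset
  have hsuper : ∫ x in Ω ∩ B, D x ∂μ ≤ c * η := by
    calc ∫ x in Ω ∩ B, D x ∂μ ≤ ∫ x in Ω ∩ B, c * W x ∂μ :=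
          setIntegral_mono_on (hD.mono_set inter_subset_left)
            ((hW.mono_set inter_subset_left).const_mul c) (hΩ.inter hB)
            fun x hx => hlarge x hx.1 hx.2
      _ = c * ∫ x in Ω ∩ B, W x ∂μ := integral_const_mul c _
      _ ≤ c * η := by gcongr; exact hequi _ inter_subset_left (hΩ.inter hB) hΩB
  rw [← integral_inter_add_sdiff hB hD]
  linarith

theorem abs_setIntegral_sub_le_of_integrableOn_iff {F₁ F₂ W : α → ℝ} {b : ℝ}
    (h₁ : IntegrableOn F₁ Ω μ ↔ IntegrableOn W Ω μ)
    (h₂ : IntegrableOn F₂ Ω μ ↔ IntegrableOn W Ω μ)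
    (hb : IntegrableOn W Ω μ → ∫ x in Ω, |F₁ x - F₂ x| ∂μ ≤ b) (hb0 : 0 ≤ b) :
    |∫ x in Ω, F₁ x ∂μ - ∫ x in Ω, F₂ x ∂μ| ≤ b := by
  by_cases hW : IntegrableOn W Ω μ
  · rw [← integral_sub (h₁.2 hW) (h₂.2 hW)]
    exact abs_integral_le_integral_abs.trans (hb hW)
  · rwa [integral_undef (mt h₁.1 hW), integral_undef (mt h₂.1 hW), sub_zero, abs_zero]

end

theorem tendsto_setIntegral_shift_sub {ι α E : Type*} {N : ℕ} [MeasurableSpace α]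
    {μ : Measure α} [NormedAddCommGroup E] [ProperSpace E] [MeasurableSpace E] [BorelSpace E]
    {l : Filter ι} {f : (Fin N → ℝ) → E → ℝ} {p β K : ℝ} (hp : 0 < p) (hβ : 0 < β)
    (hf0 : ∀ y ξ, 0 ≤ f y ξ) (hcont : Continuous fun q : (Fin N → ℝ) × E => f q.1 q.2)
    (hper : ∀ (k : Fin N → ℤ) (y : Fin N → ℝ) ξ, f (y + fun j => (k j : ℝ)) ξ = f y ξ)
    (hgrowth : ∀ y ξ, (1 / β) * ‖ξ‖ ^ p - β ≤ f y ξ ∧ f y ξ ≤ β * (1 + ‖ξ‖ ^ p))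
    {Ω : Set α} (hΩ : MeasurableSet Ω) (hμΩ : μ Ω ≠ ⊤)
    {y : ι → α → Fin N → ℝ} (hy : ∀ n, Measurable (y n))
    {g : ι → α → E} (hg : ∀ n, Measurable (g n)) (hbd : ∀ n, ∫ x in Ω, ‖g n x‖ ^ p ∂μ ≤ K)
    (hequi : ∀ ε > (0 : ℝ), ∃ δ > (0 : ℝ), ∀ E ⊆ Ω, MeasurableSet E →
      μ E < ENNReal.ofReal δ → ∀ n, ∫ x in E, ‖g n x‖ ^ p ∂μ < ε)
    {r : ι → Fin N → ℝ} (hr : Tendsto r l (𝓝 0)) :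
    Tendsto (fun n => ∫ x in Ω, f (y n x - r n) (g n x) ∂μ - ∫ x in Ω, f (y n x) (g n x) ∂μ)
      l (𝓝 0) := by
  rw [Metric.tendsto_nhds]
  intro η hη
  obtain ⟨δ, hδ, hequiδ⟩ := hequi (η / (4 * β)) (by positivity)
  set t := |K| / δ + 1
  have ht : 1 ≤ t := by have := div_nonneg (abs_nonneg K) hδ.le; linarith
  have hKt : K < t * δ := by
    rw [add_mul, div_mul_cancel₀ _ hδ.ne']
    linarith [le_abs_self K]
  set a := η / (2 * (μ.real Ω + 1))
  have haΩ : a * μ.real Ω < η / 2 := by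
    rw [div_mul_eq_mul_div, div_lt_div_iff₀ (by positivity) two_pos]
    nlinarith [measureReal_nonneg (μ := μ) (s := Ω)]
  obtain ⟨ρ, hρ, hunif⟩ := exists_forall_dist_lt_of_periodic hcont hper
    (isCompact_closedBall (0 : E) (t ^ p⁻¹)) (show 0 < a by positivity)
  filter_upwards [hr (Metric.ball_mem_nhds 0 hρ)] with n hn
  have hWm : Measurable fun x => ‖g n x‖ ^ p := (hg n).norm.pow_const p
  have hint {z : α → Fin N → ℝ} (hz : Measurable z) :
      IntegrableOn (fun x => f (z x) (g n x)) Ω μ ↔ IntegrableOn (fun x => ‖g n x‖ ^ p) Ω μ :=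
    integrableOn_iff_of_growth hβ hμΩ
      (hcont.measurable.comp (hz.prodMk (hg n))).aestronglyMeasurable
      hWm.aestronglyMeasurable (fun _ => hf0 _ _) (fun _ => by positivity) (fun _ => hgrowth _ _)
  have hy' : Measurable fun x => y n x - r n := (hy n).sub_const (r n)
  have hsmall (x : α) (_ : x ∈ Ω) (hx : ‖g n x‖ ^ p < t) :
      |f (y n x - r n) (g n x) - f (y n x) (g n x)| ≤ a := by
    refine (hunif _ _ ?_ _ ?_).le
    · simpa [dist_eq_norm] using hn
    · rw [mem_closedBall_zero_iff, Real.le_rpow_inv_iff_of_pos (norm_nonneg _) (by positivity) hp]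
      exact hx.le
  have hlarge (x : α) (_ : x ∈ Ω) (hx : t ≤ ‖g n x‖ ^ p) :
      |f (y n x - r n) (g n x) - f (y n x) (g n x)| ≤ 2 * β * ‖g n x‖ ^ p :=
    abs_sub_le_of_growth hf0 (fun y ξ => (hgrowth y ξ).2) hβ.le (ht.trans hx) _ _
  rw [Real.dist_eq, sub_zero]
  calc _ ≤ a * μ.real Ω + 2 * β * (η / (4 * β)) := by
        refine abs_setIntegral_sub_le_of_integrableOn_iff (hint hy') (hint (hy n))
          (fun hWi => ?_) (by positivity)
        exact setIntegral_le_of_sublevel_superlevel_bounds hΩ hμΩ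
          (((hint hy').2 hWi).sub ((hint (hy n)).2 hWi)).abs hWi hWm
          (fun _ _ => by positivity) (hbd n) (by positivity) hKt
          (fun E hE hEm hEμ => (hequiδ E hE hEm hEμ n).le) (by positivity) (by positivity)
          hsmall hlarge
    _ < η := by
        field_simp
        linarith

theorem stmt14_general (N d : ℕ) (p β : ℝ) (hp : 1 < p) (hβ : 0 < β)
    (f : (Fin N → ℝ) → (Fin d → Fin N → ℝ) → ℝ)
    (hf0 : ∀ y ξ, 0 ≤ f y ξ)
    (hcont : Continuous fun q : (Fin N → ℝ) × (Fin d → Fin N → ℝ) => f q.1 q.2)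
    (hper : ∀ (k : Fin N → ℤ) (y : Fin N → ℝ) ξ, f (y + fun j => (k j : ℝ)) ξ = f y ξ)
    (hgrowth : ∀ y ξ, (1 / β) * ‖ξ‖ ^ p - β ≤ f y ξ ∧ f y ξ ≤ β * (1 + ‖ξ‖ ^ p))
    (Ω : Set (Fin N → ℝ)) (hΩo : IsOpen Ω) (hΩb : Bornology.IsBounded Ω)
    (u : ℕ → (Fin N → ℝ) → (Fin d → ℝ))
    (K : ℝ) (hbd : ∀ n,
      (∫ x in Ω, ‖(fun a b => fderiv ℝ (u n) x (Pi.single b 1) a : Fin d → Fin N → ℝ)‖ ^ p) ≤ K)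
    (hequi : ∀ ε > (0 : ℝ), ∃ δ > (0 : ℝ), ∀ E ⊆ Ω, MeasurableSet E →
      volume E < ENNReal.ofReal δ → ∀ n,
      (∫ x in E, ‖(fun a b => fderiv ℝ (u n) x (Pi.single b 1) a : Fin d → Fin N → ℝ)‖ ^ p) < ε)
    (r : ℕ → Fin N → ℝ) (hr : Tendsto r atTop (nhds 0))
    (ε : ℕ → ℝ) :
    Filter.liminf (fun n => ∫ x in Ω,
        f (fun j => x j / ε n - r n j) (fun a b => fderiv ℝ (u n) x (Pi.single b 1) a)) atTop
      = Filter.liminf (fun n => ∫ x in Ω,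
        f (fun j => x j / ε n) (fun a b => fderiv ℝ (u n) x (Pi.single b 1) a)) atTop :=
  Real.liminf_eq_of_tendsto_sub <|
    tendsto_setIntegral_shift_sub (zero_lt_one.trans hp) hβ hf0 hcont hper hgrowth
      hΩo.measurableSet hΩb.measure_lt_top.ne (y := fun n x j => x j / ε n) (by fun_prop)
      (fun n => by fun_prop) hbd hequi hr

/-- insensitivity of the liminf energy to a vanishing shift of the
oscillating variable. For `f` continuous, `ℤ^N`-periodic in `y`, with `p`-growth and
`p`-Lipschitz in `ξ`, and a sequence `u_n` bounded in `W^{1,p}(Ω;ℝ^d)` (as implied by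
weak convergence) with `{|∇u_n|^p}` equi-integrable, and `r_n → 0`, `ε_n → 0⁺`,
`liminf_n ∫_Ω f(x/ε_n − r_n; ∇u_n) dx = liminf_n ∫_Ω f(x/ε_n; ∇u_n) dx`. -/
theorem stmt14 (N d : ℕ) (p β C : ℝ) (hp : 1 < p) (hβ : 0 < β) (hC : 0 < C)
    (f : (Fin N → ℝ) → (Fin d → Fin N → ℝ) → ℝ)
    (hf0 : ∀ y ξ, 0 ≤ f y ξ)
    (hcont : Continuous fun q : (Fin N → ℝ) × (Fin d → Fin N → ℝ) => f q.1 q.2)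
    (hper : ∀ (k : Fin N → ℤ) (y : Fin N → ℝ) ξ, f (y + fun j => (k j : ℝ)) ξ = f y ξ)
    (hgrowth : ∀ y ξ, (1 / β) * ‖ξ‖ ^ p - β ≤ f y ξ ∧ f y ξ ≤ β * (1 + ‖ξ‖ ^ p))
    (hlip : ∀ y ξ η, |f y ξ - f y η| ≤ C * (1 + ‖ξ‖ ^ (p - 1) + ‖η‖ ^ (p - 1)) * ‖ξ - η‖)
    (Ω : Set (Fin N → ℝ)) (hΩo : IsOpen Ω) (hΩb : Bornology.IsBounded Ω)
    (u : ℕ → (Fin N → ℝ) → (Fin d → ℝ)) (hu : ∀ n, Differentiable ℝ (u n))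
    (K : ℝ) (hbd : ∀ n,
      (∫ x in Ω, ‖(fun a b => fderiv ℝ (u n) x (Pi.single b 1) a : Fin d → Fin N → ℝ)‖ ^ p) ≤ K)
    (hequi : ∀ ε > (0 : ℝ), ∃ δ > (0 : ℝ), ∀ E ⊆ Ω, MeasurableSet E →
      volume E < ENNReal.ofReal δ → ∀ n,
      (∫ x in E, ‖(fun a b => fderiv ℝ (u n) x (Pi.single b 1) a : Fin d → Fin N → ℝ)‖ ^ p) < ε)
    (r : ℕ → Fin N → ℝ) (hr : Tendsto r atTop (nhds 0))
    (ε : ℕ → ℝ) (hεpos : ∀ n, 0 < ε n) (hε0 : Tendsto ε atTop (nhds 0)) :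
    Filter.liminf (fun n => ∫ x in Ω,
        f (fun j => x j / ε n - r n j) (fun a b => fderiv ℝ (u n) x (Pi.single b 1) a)) atTop
      = Filter.liminf (fun n => ∫ x in Ω,
        f (fun j => x j / ε n) (fun a b => fderiv ℝ (u n) x (Pi.single b 1) a)) atTop :=
  stmt14_general N d p β hp hβ f hf0 hcont hper hgrowth Ω hΩo hΩb u K hbd hequi r hr ε
end
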